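/- arXiv:1403.0720 — 4 statements merged into one kernel-verified Lean document; each statement's English description precedes it below -/
import Mathlib

section
/- Let K be a compact metrizable abelian group with Haar probability measure σ, and let T : K → K be translation by a fixed element whose orbit is dense (so (K,T) is strictly ergodic with unique invariant measure σ). If E₁ is a compact subset of K with σ(E₁) > 0, then there is a closed subset E of E₁ with σ(E) = σ(E₁) such that for σ-almost every ω in K, the set {Tⁿω : n ∈ ℤ} ∩ E is dense in E. -/
open MeasureTheory Filter Topology

/-- In a compact metrizable abelian group `K` with Haar probability measure `σ`,
translation by an element `g` with dense `ℤ`-orbit is strictly ergodic. For any compact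
`E₁ ⊆ K` with `σ E₁ > 0` there is a closed `E ⊆ E₁` of the same measure such that for
`σ`-a.e. `ω`, the intersection of the orbit `{ω + n • g : n ∈ ℤ}` with `E` is dense in `E`. -/
theorem stmt0 {K : Type*} [TopologicalSpace K] [AddCommGroup K] [IsTopologicalAddGroup K]
    [CompactSpace K] [TopologicalSpace.MetrizableSpace K] [MeasurableSpace K] [BorelSpace K]
    (σ : Measure K) [IsProbabilityMeasure σ] [MeasureTheory.Measure.IsAddHaarMeasure σ]
    (g : K) (hdense : Dense {x : K | ∃ n : ℤ, x = n • g})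
    (E₁ : Set K) (hE₁ : IsCompact E₁) (hpos : 0 < σ E₁) :
    ∃ E : Set K, E ⊆ E₁ ∧ IsClosed E ∧ σ E = σ E₁ ∧
      ∀ᵐ ω ∂σ, E ⊆ closure ({x : K | ∃ n : ℤ, x = ω + n • g} ∩ E) := by
  letI : MetricSpace K := TopologicalSpace.metrizableSpaceMetric K
  -- ergodicity of translation by g
  have hg : DenseRange (fun n : ℤ => n • g) := by
    have : Set.range (fun n : ℤ => n • g) = {x : K | ∃ n : ℤ, x = n • g} := by
      ext x; simp [eq_comm]
    rwa [DenseRange, this]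
  have herg : Ergodic (g + ·) σ := ergodic_add_left_of_denseRange_zsmul hg σ
  -- key ergodic consequence
  have key : ∀ A : Set K, MeasurableSet A → 0 < σ A →
      σ {ω | ∀ n : ℤ, ω + n • g ∉ A} = 0 := by
    intro A hAm hApos
    set S : Set K := ⋂ n : ℤ, (fun ω => ω + n • g) ⁻¹' Aᶜ with hSdef
    have hSm : MeasurableSet S :=
      MeasurableSet.iInter fun n => (measurable_add_const (n • g)) hAm.compl
    have hSinv : (g + ·) ⁻¹' S = S := by
      ext ω
      simp only [Set.mem_preimage, hSdef, Set.mem_iInter, Set.mem_compl_iff]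
      constructor
      · intro h n
        have h' := h (n - 1)
        have : g + ω + (n - 1) • g = ω + n • g := by
          rw [sub_smul, one_smul]; abel
        rwa [this] at h'
      · intro h n
        have h' := h (n + 1)
        have : g + ω + n • g = ω + (n + 1) • g := by
          rw [add_smul, one_smul]; abel
        rwa [this]
    have hSA : S ⊆ Aᶜ := fun ω hω => by
      have := Set.mem_iInter.1 hω 0
      simpa using this
    have := herg.measure_self_or_compl_eq_zero hSm hSinv
    have hS : σ S = 0 := by
      rcases this with h | h
      · exact h
      · exfalso
        have hA : A ⊆ Sᶜ := fun x hx hxS => hSA hxS hx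
        have : σ A ≤ σ Sᶜ := measure_mono hA
        rw [h] at this
        exact absurd (le_antisymm this zero_le) (ne_of_gt hApos)
    have : {ω | ∀ n : ℤ, ω + n • g ∉ A} = S := by
      ext ω; simp [hSdef]
    rwa [this]
  -- countable basis
  obtain ⟨B, hBc, hBne, hBbasis⟩ := TopologicalSpace.exists_countable_basis K
  set N : Set K := ⋃ b ∈ {b ∈ B | σ (b ∩ E₁) = 0}, b with hNdef
  have hNopen : IsOpen N :=
    isOpen_biUnion fun b hb => hBbasis.isOpen hb.1
  have hNnull : σ (E₁ ∩ N) = 0 := by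
    have : E₁ ∩ N = ⋃ b ∈ {b ∈ B | σ (b ∩ E₁) = 0}, E₁ ∩ b := by
      rw [hNdef, Set.inter_iUnion₂]
    rw [this]
    refine (measure_biUnion_null_iff (hBc.mono (Set.sep_subset _ _))).2 ?_
    intro b hb
    rw [Set.inter_comm]; exact hb.2
  refine ⟨E₁ \ N, Set.diff_subset, hE₁.isClosed.sdiff hNopen, ?_, ?_⟩
  · have : E₁ \ N = E₁ \ (E₁ ∩ N) := by
      ext x; simp [Set.mem_diff]
    rw [this, measure_diff_null hNnull]
  · -- every point of E has positive-measure neighborhoods in E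
    set E := E₁ \ N with hEdef
    have hEm : MeasurableSet E := (hE₁.isClosed.sdiff hNopen).measurableSet
    have hkey : ∀ x ∈ E, ∀ b ∈ B, x ∈ b → 0 < σ (b ∩ E) := by
      intro x hx b hb hxb
      have hb1 : σ (b ∩ E₁) ≠ 0 := by
        intro h0
        exact hx.2 (Set.mem_biUnion ⟨hb, h0⟩ hxb)
      have : b ∩ E = (b ∩ E₁) \ (E₁ ∩ N) := by
        ext y
        simp only [hEdef, Set.mem_inter_iff, Set.mem_diff]
        tauto
      rw [this, measure_diff_null hNnull]
      exact lt_of_le_of_ne zero_le (Ne.symm hb1)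
    set B₀ := {b ∈ B | 0 < σ (b ∩ E)} with hB₀def
    have hB₀c : B₀.Countable := hBc.mono (Set.sep_subset _ _)
    have hae : ∀ᵐ ω ∂σ, ∀ b ∈ B₀, ∃ n : ℤ, ω + n • g ∈ b ∩ E := by
      rw [ae_ball_iff hB₀c]
      intro b hb
      have hAm : MeasurableSet (b ∩ E) := (hBbasis.isOpen hb.1).measurableSet.inter hEm
      have := key (b ∩ E) hAm hb.2
      rw [ae_iff]
      convert this using 2
      ext ω
      simp
    filter_upwards [hae] with ω hω
    intro x hx
    rw [mem_closure_iff]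
    intro o ho hxo
    obtain ⟨b, hb, hxb, hbo⟩ := hBbasis.exists_subset_of_mem_open hxo ho
    have hbB₀ : b ∈ B₀ := ⟨hb, hkey x hx b hb hxb⟩
    obtain ⟨n, hn⟩ := hω b hbB₀
    exact ⟨ω + n • g, hbo hn.1, ⟨n, rfl⟩, hn.2⟩
end

section
/- Let (K,T) be a uniquely ergodic topological dynamical system on a compact metric space with unique invariant Borel probability measure σ. If E is a closed subset of K and ω is a point such that the ergodic averages (1/n)∑_{j=0}^{n-1} 1_E(Tʲω) converge to σ(E), and H_ω denotes the closure of {Tⁿω : n ∈ ℤ} ∩ E, then σ(E \ H_ω) = 0, i.e. H_ω has full measure in E. -/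
open MeasureTheory Filter Topology

/-- Let `(K,T)` be uniquely ergodic with unique invariant measure `σ`. If `E`
is closed and the ergodic averages of the indicator of `E` along the orbit of `ω` converge
to `σ E`, then, with `H_ω` the closure of the two-sided orbit of `ω` intersected with `E`,
`H_ω` has full measure in `E`: `σ (E \ H_ω) = 0`. -/
theorem stmt1 {K : Type*} [MetricSpace K] [CompactSpace K] [MeasurableSpace K] [BorelSpace K]
    (T : K ≃ₜ K) (σ : Measure K) [IsProbabilityMeasure σ]
    (hσ : MeasurePreserving T σ σ)
    (hue : ∀ p : K → ℝ, Continuous p → ∀ x : K,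
      Tendsto (fun n : ℕ => (n : ℝ)⁻¹ * ∑ j ∈ Finset.range n, p ((T : K → K)^[j] x))
        atTop (𝓝 (∫ y, p y ∂σ)))
    (E : Set K) (hE : IsClosed E) (ω : K)
    (havg : Tendsto
      (fun n : ℕ => (n : ℝ)⁻¹ * ∑ j ∈ Finset.range n,
        E.indicator (fun _ => (1 : ℝ)) ((T : K → K)^[j] ω))
      atTop (𝓝 (σ E).toReal)) :
    σ (E \ closure ({x : K | ∃ n : ℤ, x = (T.toEquiv ^ n) ω} ∩ E)) = 0 := by
  set H : Set K := closure ({x : K | ∃ n : ℤ, x = (T.toEquiv ^ n) ω} ∩ E) with hHdef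
  have hHE : H ⊆ E := closure_minimal Set.inter_subset_right hE
  have hHclosed : IsClosed H := isClosed_closure
  -- orbit points in E are in H
  have horb : ∀ j : ℕ, (T : K → K)^[j] ω ∈ E → (T : K → K)^[j] ω ∈ H := by
    intro j hj
    apply subset_closure
    refine ⟨⟨(j : ℤ), ?_⟩, hj⟩
    rw [zpow_natCast, ← Equiv.Perm.iterate_eq_pow]
    rfl
  -- main inequality: σ E ≤ σ H
  have key : σ E ≤ σ H := by
    refine ENNReal.le_of_forall_pos_le_add fun ε hε hfin => ?_
    obtain ⟨U, hHU, hUopen, hUlt⟩ :=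
      H.exists_isOpen_lt_add (μ := σ) (measure_ne_top σ H)
        (by exact_mod_cast hε.ne' : (ε : ENNReal) ≠ 0)
    -- Urysohn
    obtain ⟨f, hf0, hf1, hf01⟩ := exists_continuous_zero_one_of_isCompact
      (hUopen.isClosed_compl.isCompact) hHclosed
      (by simpa [Set.disjoint_compl_left_iff_subset] using hHU)
    have hfint : Integrable f σ :=
      f.continuous.integrable_of_hasCompactSupport (HasCompactSupport.of_compactSpace _)
    -- pointwise : indicator E ≤ f on orbit points
    have hpt : ∀ j : ℕ, E.indicator (fun _ => (1 : ℝ)) ((T : K → K)^[j] ω)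
        ≤ f ((T : K → K)^[j] ω) := by
      intro j
      by_cases hj : (T : K → K)^[j] ω ∈ E
      · rw [Set.indicator_of_mem hj, hf1 (horb j hj)]; simp
      · rw [Set.indicator_of_notMem hj]
        exact (hf01 _).1
    -- averages comparison
    have hle : (σ E).toReal ≤ ∫ y, f y ∂σ := by
      refine le_of_tendsto_of_tendsto' havg (hue f f.continuous ω) fun n => ?_
      exact mul_le_mul_of_nonneg_left (Finset.sum_le_sum fun j _ => hpt j)
        (by positivity)
    -- ∫ f ≤ σ U
    have hfU : ∫ y, f y ∂σ ≤ (σ U).toReal := by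
      have : ∫ y, f y ∂σ ≤ ∫ y, U.indicator (1 : K → ℝ) y ∂σ := by
        refine integral_mono hfint
          ((integrable_const (1 : ℝ)).indicator hUopen.measurableSet) fun x => ?_
        by_cases hx : x ∈ U
        · rw [Set.indicator_of_mem hx]; exact (hf01 x).2
        · rw [Set.indicator_of_notMem hx]
          have := hf0 (by simpa using hx)
          simp only [Pi.zero_apply] at this
          rw [this]
      rwa [integral_indicator_one hUopen.measurableSet] at this
    have hEU : σ E ≤ σ U := by
      rw [← ENNReal.toReal_le_toReal (measure_ne_top σ E) (measure_ne_top σ U)]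
      exact hle.trans hfU
    exact hEU.trans hUlt.le
  have hdiff : σ (E \ H) = σ E - σ H :=
    measure_diff hHE hHclosed.measurableSet.nullMeasurableSet (measure_ne_top σ H)
  rw [hdiff, tsub_eq_zero_of_le key]
end

section
/- Let K be a compact abelian group with Haar measure σ, and let φ ∈ L^∞(σ) with Fourier coefficients a_λ(φ) (λ in the dual group Γ of K). Let Λ be the smallest subgroup of Γ containing all λ with a_λ(|φ|) ≠ 0, and let Γ₀ be the smallest subgroup containing all λ with a_λ(φ) ≠ 0. Then Λ ⊆ Γ₀. (Proof idea: (|φ|² + ε)^{1/2} = exp(½ log(φ·conj(φ) + ε)) has Fourier series supported in Γ₀ for each ε > 0, and a_λ(|φ|) = lim_{ε→0} a_λ((|φ|²+ε)^{1/2}).) -/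
open MeasureTheory Filter Topology Complex

private lemma stmt7_conj {K : Type*} {Γ : Type*} [AddCommGroup Γ]
    (χ : Γ → K → ℂ)
    (hχ0 : ∀ x, χ 0 x = 1)
    (hχadd : ∀ l m x, χ (l + m) x = χ l x * χ m x)
    (hχu : ∀ l x, ‖χ l x‖ = 1) (l : Γ) (x : K) :
    (starRingEnd ℂ) (χ l x) = χ (-l) x := by
  have h1 : χ l x * χ (-l) x = 1 := by
    rw [← hχadd, add_neg_cancel, hχ0]
  have hA : (starRingEnd ℂ) (χ l x) * χ l x = 1 := by
    rw [mul_comm, Complex.mul_conj]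
    have := hχu l x
    rw [Complex.normSq_eq_norm_sq, this]
    norm_num
  calc (starRingEnd ℂ) (χ l x) = (starRingEnd ℂ) (χ l x) * (χ l x * χ (-l) x) := by
        rw [h1, mul_one]
    _ = ((starRingEnd ℂ) (χ l x) * χ l x) * χ (-l) x := by ring
    _ = χ (-l) x := by rw [hA, one_mul]

private lemma stmt7_memL2 {K : Type*} [MeasurableSpace K] {σ : Measure K}
    [IsProbabilityMeasure σ] {ψ : K → ℂ} (hm : Measurable ψ) {C : ℝ}
    (hb : ∀ x, ‖ψ x‖ ≤ C) : MemLp ψ 2 σ :=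
  MemLp.of_bound hm.aestronglyMeasurable C (ae_of_all _ hb)

private lemma stmt7_integrable {K : Type*} [MeasurableSpace K] {σ : Measure K}
    [IsProbabilityMeasure σ] {ψ : K → ℂ} (hm : Measurable ψ) {C : ℝ}
    (hb : ∀ x, ‖ψ x‖ ≤ C) : Integrable ψ σ :=
  memLp_one_iff_integrable.mp (MemLp.of_bound hm.aestronglyMeasurable C (ae_of_all _ hb))

private lemma stmt7_inner {K : Type*} [MeasurableSpace K] {σ : Measure K}
    [IsProbabilityMeasure σ] {f g : K → ℂ} (hf : MemLp f 2 σ) (hg : MemLp g 2 σ) :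
    (inner ℂ (hf.toLp f) (hg.toLp g) : ℂ) = ∫ x, (starRingEnd ℂ) (f x) * g x ∂σ := by
  rw [MeasureTheory.L2.inner_def]
  refine integral_congr_ae ?_
  filter_upwards [hf.coeFn_toLp, hg.coeFn_toLp] with x h1 h2
  rw [h1, h2, RCLike.inner_apply, mul_comm]

private lemma stmt7_mul {K : Type*} [MeasurableSpace K] (σ : Measure K) [IsProbabilityMeasure σ]
    {Γ : Type*} [AddCommGroup Γ] [DecidableEq Γ]
    (χ : Γ → K → ℂ)
    (hχ0 : ∀ x, χ 0 x = 1)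
    (hχadd : ∀ l m x, χ (l + m) x = χ l x * χ m x)
    (hχm : ∀ l, Measurable (χ l)) (hχu : ∀ l x, ‖χ l x‖ = 1)
    (horth : ∀ l m, (∫ x, χ l x * (starRingEnd ℂ) (χ m x) ∂σ) = if l = m then 1 else 0)
    (hcomplete : ∀ ψ : K → ℂ, Measurable ψ → Integrable ψ σ →
      (∀ l, (∫ x, ψ x * (starRingEnd ℂ) (χ l x) ∂σ) = 0) → ψ =ᵐ[σ] fun _ => 0)
    (G : AddSubgroup Γ)
    {ψ₁ ψ₂ : K → ℂ} {C₁ C₂ : ℝ} (h1m : Measurable ψ₁) (h2m : Measurable ψ₂)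
    (h1b : ∀ x, ‖ψ₁ x‖ ≤ C₁) (h2b : ∀ x, ‖ψ₂ x‖ ≤ C₂)
    (h1s : ∀ l ∉ G, (∫ x, ψ₁ x * (starRingEnd ℂ) (χ l x) ∂σ) = 0)
    (h2s : ∀ l ∉ G, (∫ x, ψ₂ x * (starRingEnd ℂ) (χ l x) ∂σ) = 0)
    {m : Γ} (hm : m ∉ G) :
    (∫ x, ψ₁ x * ψ₂ x * (starRingEnd ℂ) (χ m x) ∂σ) = 0 := by
  have hconj := stmt7_conj χ hχ0 hχadd hχu
  have hχL2 : ∀ l, MemLp (χ l) 2 σ := fun l =>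
    stmt7_memL2 (hχm l) (C := 1) (fun x => le_of_eq (hχu l x))
  set e : Γ → Lp ℂ 2 σ := fun l => (hχL2 l).toLp (χ l) with he
  have honb : Orthonormal ℂ e := by
    rw [orthonormal_iff_ite]
    intro l m'
    rw [stmt7_inner (hχL2 l) (hχL2 m')]
    have : (∫ x, (starRingEnd ℂ) (χ l x) * χ m' x ∂σ)
        = ∫ x, χ m' x * (starRingEnd ℂ) (χ l x) ∂σ := by
      congr 1; ext x; ring
    rw [this, horth m' l]
    by_cases h : l = m' <;> simp [h, eq_comm]
  have hdense : (Submodule.span ℂ (Set.range e))ᗮ = ⊥ := by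
    rw [Submodule.eq_bot_iff]
    intro f hf
    have hf' : ∀ l, (inner ℂ (e l) f : ℂ) = 0 := fun l =>
      (Submodule.mem_orthogonal _ f).mp hf _ (Submodule.subset_span (Set.mem_range_self l))
    have hmeas : Measurable (f : K → ℂ) :=
      (Lp.stronglyMeasurable f).measurable
    have hint : Integrable (f : K → ℂ) σ :=
      memLp_one_iff_integrable.mp ((Lp.memLp f).mono_exponent (by norm_num))
    have hzero : ∀ l, (∫ x, (f : K → ℂ) x * (starRingEnd ℂ) (χ l x) ∂σ) = 0 := by
      intro l
      have h1 : (inner ℂ (e l) f : ℂ) = 0 := hf' l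
      rw [MeasureTheory.L2.inner_def] at h1
      rw [← h1]
      refine integral_congr_ae ?_
      filter_upwards [(hχL2 l).coeFn_toLp] with x hx
      have hex : (e l : K → ℂ) x = χ l x := hx
      rw [RCLike.inner_apply, hex, mul_comm]
    have := hcomplete _ hmeas hint hzero
    exact (Lp.ext (this.trans (Lp.coeFn_zero ℂ 2 σ).symm))
  set hb : HilbertBasis Γ ℂ (Lp ℂ 2 σ) := HilbertBasis.mkOfOrthogonalEqBot honb hdense
    with hbdef
  have hbcoe : ∀ l, hb l = e l := fun l => by
    rw [hbdef, HilbertBasis.coe_mkOfOrthogonalEqBot]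
  have hx1 : MemLp (fun t => (starRingEnd ℂ) (ψ₁ t)) 2 σ :=
    stmt7_memL2 (Complex.continuous_conj.measurable.comp h1m)
      (C := C₁) (fun x => by simpa using h1b x)
  have hy1 : MemLp (fun t => ψ₂ t * (starRingEnd ℂ) (χ m t)) 2 σ := by
    refine stmt7_memL2 (h2m.mul (Complex.continuous_conj.measurable.comp (hχm m)))
      (C := C₂) (fun x => ?_)
    calc ‖ψ₂ x * (starRingEnd ℂ) (χ m x)‖ = ‖ψ₂ x‖ * ‖χ m x‖ := by
          rw [norm_mul]; simp
      _ ≤ C₂ := by rw [hχu m x, mul_one]; exact h2b x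
  set x := hx1.toLp _ with hxdef
  set y := hy1.toLp _ with hydef
  have hterm : ∀ l : Γ, (inner ℂ x (hb l) : ℂ) * inner ℂ (hb l) y = 0 := by
    intro l
    rw [hbcoe l]
    by_cases hl : l ∈ G
    · have hlm : l + m ∉ G := fun h => hm (by simpa using G.sub_mem h hl)
      have h2 : (inner ℂ (e l) y : ℂ) = 0 := by
        rw [he]
        simp only []
        rw [stmt7_inner (hχL2 l) hy1, ← h2s (l + m) hlm]
        refine integral_congr_ae (ae_of_all _ fun t => ?_)
        have : (starRingEnd ℂ) (χ (l + m) t)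
            = (starRingEnd ℂ) (χ l t) * (starRingEnd ℂ) (χ m t) := by
          rw [hχadd]; exact map_mul _ _ _
        simp only [this]; ring
      rw [h2, mul_zero]
    · have hnl : -l ∉ G := fun h => hl (by simpa using G.neg_mem h)
      have h1 : (inner ℂ x (e l) : ℂ) = 0 := by
        rw [he]
        simp only []
        rw [stmt7_inner hx1 (hχL2 l), ← h1s (-l) hnl]
        refine integral_congr_ae (ae_of_all _ fun t => ?_)
        simp only [Complex.conj_conj, hconj, neg_neg]
      rw [h1, zero_mul]
  have hxy : (inner ℂ x y : ℂ) = 0 := by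
    rw [← hb.tsum_inner_mul_inner x y]
    simp only [hterm, tsum_zero]
  rw [stmt7_inner hx1 hy1] at hxy
  rw [← hxy]
  refine integral_congr_ae (ae_of_all _ fun t => ?_)
  simp only [Complex.conj_conj]; ring

/-- For a bounded function `φ` on a compact abelian group with orthonormal
complete character system `χ` indexed by the dual group `Γ`, the smallest subgroup `Λ`
supporting the Fourier coefficients of `|φ|` is contained in the smallest subgroup `Γ₀`
supporting the Fourier coefficients of `φ`. -/
theorem stmt7 {K : Type*} [MeasurableSpace K] (σ : Measure K) [IsProbabilityMeasure σ]
    (Γ : Type*) [AddCommGroup Γ] [DecidableEq Γ]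
    (χ : Γ → K → ℂ)
    (hχ0 : ∀ x, χ 0 x = 1)
    (hχadd : ∀ l m x, χ (l + m) x = χ l x * χ m x)
    (hχm : ∀ l, Measurable (χ l)) (hχu : ∀ l x, ‖χ l x‖ = 1)
    (horth : ∀ l m, (∫ x, χ l x * (starRingEnd ℂ) (χ m x) ∂σ) = if l = m then 1 else 0)
    (hcomplete : ∀ ψ : K → ℂ, Measurable ψ → Integrable ψ σ →
      (∀ l, (∫ x, ψ x * (starRingEnd ℂ) (χ l x) ∂σ) = 0) → ψ =ᵐ[σ] fun _ => 0)
    (φ : K → ℂ) (M : ℝ) (hφm : Measurable φ) (hφb : ∀ x, ‖φ x‖ ≤ M) :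
    AddSubgroup.closure {l : Γ | (∫ x, (‖φ x‖ : ℂ) * (starRingEnd ℂ) (χ l x) ∂σ) ≠ 0}
      ≤ AddSubgroup.closure {l : Γ | (∫ x, φ x * (starRingEnd ℂ) (χ l x) ∂σ) ≠ 0} := by
  classical
  have hconj := stmt7_conj χ hχ0 hχadd hχu
  rw [AddSubgroup.closure_le]
  set G := AddSubgroup.closure {l : Γ | (∫ x, φ x * (starRingEnd ℂ) (χ l x) ∂σ) ≠ 0} with hGdef
  intro m hm
  by_contra hmG
  refine hm ?_
  have hKne : Nonempty K := by
    by_contra h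
    rw [not_nonempty_iff] at h
    have h2 : σ Set.univ = 0 := by
      rw [Set.univ_eq_empty_iff.mpr h]; exact measure_empty
    rw [measure_univ] at h2; exact one_ne_zero h2
  have hM0 : 0 ≤ M := le_trans (norm_nonneg _) (hφb (Classical.arbitrary K))
  have hφsupp : ∀ l ∉ G, (∫ x, φ x * (starRingEnd ℂ) (χ l x) ∂σ) = 0 := by
    intro l hl
    by_contra h
    exact hl (AddSubgroup.subset_closure h)
  have hφcm : Measurable fun t => (starRingEnd ℂ) (φ t) :=
    Complex.continuous_conj.measurable.comp hφm
  have hφcb : ∀ x, ‖(starRingEnd ℂ) (φ x)‖ ≤ M := fun x => by simpa using hφb x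
  have hconjφ : ∀ l ∉ G, (∫ x, (starRingEnd ℂ) (φ x) * (starRingEnd ℂ) (χ l x) ∂σ) = 0 := by
    intro l hl
    have hnl : -l ∉ G := fun h => hl (by simpa using G.neg_mem h)
    have h0 : (∫ x, φ x * (starRingEnd ℂ) (χ (-l) x) ∂σ) = 0 := hφsupp _ hnl
    have heq : (∫ x, (starRingEnd ℂ) (φ x) * (starRingEnd ℂ) (χ l x) ∂σ)
        = ∫ x, (starRingEnd ℂ) (φ x * (starRingEnd ℂ) (χ (-l) x)) ∂σ := by
      refine integral_congr_ae (ae_of_all _ fun t => ?_)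
      simp only [map_mul, Complex.conj_conj, hconj, neg_neg]
    rw [heq, integral_conj, h0, map_zero]
  -- the function |φ|² = φ * conj φ has Fourier support in G
  have hFsupp : ∀ l ∉ G, (∫ x, φ x * (starRingEnd ℂ) (φ x) * (starRingEnd ℂ) (χ l x) ∂σ) = 0 :=
    fun l hl => stmt7_mul σ χ hχ0 hχadd hχm hχu horth hcomplete G hφm hφcm hφb hφcb
      hφsupp hconjφ hl
  have hFt : ∀ t, φ t * (starRingEnd ℂ) (φ t) = ((‖φ t‖ ^ 2 : ℝ) : ℂ) := fun t => by
    rw [Complex.mul_conj, Complex.normSq_eq_norm_sq]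
  -- polynomials of |φ|²
  have hpolyM : ∀ p : Polynomial ℝ, Measurable fun x => ((p.eval (‖φ x‖ ^ 2) : ℝ) : ℂ) :=
    fun p => Complex.measurable_ofReal.comp (p.continuous.measurable.comp
      ((hφm.norm).pow_const 2))
  have hpolyB : ∀ p : Polynomial ℝ, ∃ C, ∀ x, ‖((p.eval (‖φ x‖ ^ 2) : ℝ) : ℂ)‖ ≤ C := by
    intro p
    obtain ⟨C, hC⟩ := (isCompact_Icc (a := (0:ℝ)) (b := M ^ 2)).exists_bound_of_continuousOn
      p.continuous.continuousOn
    refine ⟨C, fun x => ?_⟩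
    rw [Complex.norm_real]
    exact (le_of_eq (Real.norm_eq_abs _).symm).trans (hC _ ⟨by positivity,
      pow_le_pow_left₀ (norm_nonneg _) (hφb x) 2⟩)
  have hpolyInt : ∀ (p : Polynomial ℝ) (l : Γ),
      Integrable (fun x => ((p.eval (‖φ x‖ ^ 2) : ℝ) : ℂ) * (starRingEnd ℂ) (χ l x)) σ := by
    intro p l
    obtain ⟨C, hC⟩ := hpolyB p
    refine stmt7_integrable ((hpolyM p).mul (Complex.continuous_conj.measurable.comp (hχm l)))
      (C := C) (fun x => ?_)
    rw [norm_mul, RCLike.norm_conj, hχu l x, mul_one]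
    exact hC x
  have hpoly : ∀ p : Polynomial ℝ, ∀ l ∉ G,
      (∫ x, ((p.eval (‖φ x‖ ^ 2) : ℝ) : ℂ) * (starRingEnd ℂ) (χ l x) ∂σ) = 0 := by
    intro p
    induction p using Polynomial.induction_on with
    | C a =>
      intro l hl
      have hl0 : (0 : Γ) ≠ l := fun h => hl (h ▸ G.zero_mem)
      have h1 : (∫ x, (starRingEnd ℂ) (χ l x) ∂σ) = 0 := by
        have h2 := horth 0 l
        rw [if_neg hl0] at h2
        rw [← h2]
        refine integral_congr_ae (ae_of_all _ fun t => ?_)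
        simp only [hχ0, one_mul]
      simp only [Polynomial.eval_C]
      rw [integral_const_mul, h1, mul_zero]
    | add p q hp hq =>
      intro l hl
      have heq : (fun x => ((Polynomial.eval (‖φ x‖ ^ 2) (p + q) : ℝ) : ℂ)
            * (starRingEnd ℂ) (χ l x))
          = fun x => ((Polynomial.eval (‖φ x‖ ^ 2) p : ℝ) : ℂ) * (starRingEnd ℂ) (χ l x)
            + ((Polynomial.eval (‖φ x‖ ^ 2) q : ℝ) : ℂ) * (starRingEnd ℂ) (χ l x) := by
        funext t
        rw [Polynomial.eval_add, Complex.ofReal_add, add_mul]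
      rw [heq, integral_add (hpolyInt p l) (hpolyInt q l), hp l hl, hq l hl, add_zero]
    | monomial n a ih =>
      intro l hl
      obtain ⟨C, hC⟩ := hpolyB (Polynomial.C a * Polynomial.X ^ n)
      have hFb : ∀ t, ‖φ t * (starRingEnd ℂ) (φ t)‖ ≤ M * M := fun t => by
        rw [norm_mul, RCLike.norm_conj]
        exact mul_le_mul (hφb t) (hφb t) (norm_nonneg _) hM0
      have key := stmt7_mul σ χ hχ0 hχadd hχm hχu horth hcomplete G
        (hpolyM (Polynomial.C a * Polynomial.X ^ n)) (hφm.mul hφcm)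
        hC hFb ih hFsupp hl
      rw [← key]
      refine integral_congr_ae (ae_of_all _ fun t => ?_)
      simp only [Pi.mul_apply, hFt t, Polynomial.eval_mul, Polynomial.eval_pow, Polynomial.eval_C,
        Polynomial.eval_X, pow_succ, Complex.ofReal_mul, Complex.ofReal_pow]
      ring
  -- the approximation argument
  have hnormM : Measurable fun x => ((‖φ x‖ : ℝ) : ℂ) :=
    Complex.measurable_ofReal.comp hφm.norm
  have hInt1 : Integrable (fun x => ((‖φ x‖ : ℝ) : ℂ) * (starRingEnd ℂ) (χ m x)) σ := by
    refine stmt7_integrable (hnormM.mul (Complex.continuous_conj.measurable.comp (hχm m)))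
      (C := M) fun x => ?_
    rw [norm_mul, RCLike.norm_conj, hχu m x, mul_one, Complex.norm_real, Real.norm_eq_abs,
      _root_.abs_of_nonneg (norm_nonneg _)]
    exact hφb x
  have hb2 : ∀ ε : ℝ, 0 < ε → ‖∫ x, ((‖φ x‖ : ℝ) : ℂ) * (starRingEnd ℂ) (χ m x) ∂σ‖ ≤ ε := by
    intro ε hε
    obtain ⟨p, hp⟩ := exists_polynomial_near_of_continuousOn 0 (M ^ 2) Real.sqrt
      Real.continuous_sqrt.continuousOn ε hε
    have h0 := hpoly p m hmG
    have hI := hpolyInt p m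
    have hfeq : (fun x => (((‖φ x‖ : ℝ) : ℂ) - ((p.eval (‖φ x‖ ^ 2) : ℝ) : ℂ))
          * (starRingEnd ℂ) (χ m x))
        = fun x => ((‖φ x‖ : ℝ) : ℂ) * (starRingEnd ℂ) (χ m x)
          - ((p.eval (‖φ x‖ ^ 2) : ℝ) : ℂ) * (starRingEnd ℂ) (χ m x) :=
      funext fun t => by ring
    have hId : Integrable (fun x => (((‖φ x‖ : ℝ) : ℂ) - ((p.eval (‖φ x‖ ^ 2) : ℝ) : ℂ))
        * (starRingEnd ℂ) (χ m x)) σ := by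
      rw [hfeq]; exact hInt1.sub hI
    have hsub : (∫ x, ((‖φ x‖ : ℝ) : ℂ) * (starRingEnd ℂ) (χ m x) ∂σ)
        = ∫ x, (((‖φ x‖ : ℝ) : ℂ) - ((p.eval (‖φ x‖ ^ 2) : ℝ) : ℂ))
            * (starRingEnd ℂ) (χ m x) ∂σ := by
      rw [hfeq, integral_sub hInt1 hI, h0, sub_zero]
    rw [hsub]
    have hbd : ∀ x, ‖(((‖φ x‖ : ℝ) : ℂ) - ((p.eval (‖φ x‖ ^ 2) : ℝ) : ℂ))
        * (starRingEnd ℂ) (χ m x)‖ ≤ ε := by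
      intro x
      rw [norm_mul, RCLike.norm_conj, hχu m x, mul_one, ← Complex.ofReal_sub,
        Complex.norm_real, Real.norm_eq_abs]
      have hx2 : ‖φ x‖ ^ 2 ∈ Set.Icc (0:ℝ) (M ^ 2) :=
        ⟨by positivity, pow_le_pow_left₀ (norm_nonneg _) (hφb x) 2⟩
      have h3 := hp _ hx2
      rw [Real.sqrt_sq (norm_nonneg _)] at h3
      rw [abs_sub_comm]
      exact le_of_lt h3
    calc ‖∫ x, (((‖φ x‖ : ℝ) : ℂ) - ((p.eval (‖φ x‖ ^ 2) : ℝ) : ℂ))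
            * (starRingEnd ℂ) (χ m x) ∂σ‖
        ≤ ∫ x, ‖(((‖φ x‖ : ℝ) : ℂ) - ((p.eval (‖φ x‖ ^ 2) : ℝ) : ℂ))
            * (starRingEnd ℂ) (χ m x)‖ ∂σ := norm_integral_le_integral_norm _
      _ ≤ ∫ _x, ε ∂σ := integral_mono hId.norm (integrable_const ε) hbd
      _ = ε := by simp [measure_univ]
  have hfin : ‖∫ x, ((‖φ x‖ : ℝ) : ℂ) * (starRingEnd ℂ) (χ m x) ∂σ‖ ≤ 0 := by
    by_contra h
    push_neg at h
    have h4 := hb2 (‖∫ x, ((‖φ x‖ : ℝ) : ℂ) * (starRingEnd ℂ) (χ m x) ∂σ‖ / 2) (by linarith)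
    linarith
  exact norm_le_zero_iff.mp hfin
end

section
/- Let K be a compact abelian group with Haar measure σ and dual group Γ ⊂ ℝ (countable, dense, with discrete topology). Fix γ > 0 in Γ and let K_γ = {x ∈ K : χ_γ(x) = 1}. Then the map (y, s) ↦ y + e_s from K_γ × [0, 2π/γ) to K is a measurable bijection carrying the measure (γ/2π)·σ₁ × dt (σ₁ the Haar measure on K_γ) to σ. -/
open MeasureTheory Filter Topology Complex Real
open scoped ENNReal

set_option maxHeartbeats 1000000 in
private lemma per_setLIntegral {T : ℝ} (hT : 0 < T) (f : ℝ → ℝ≥0∞)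
    (hf : Measurable f) (hper : Function.Periodic f T) (s₀ : ℝ) :
    ∫⁻ s in Set.Ico 0 T, f (s₀ + s) = ∫⁻ s in Set.Ico 0 T, f s := by
  have hpre : (fun s : ℝ => s₀ + s) ⁻¹' Set.Ico s₀ (s₀ + T) = Set.Ico 0 T := by
    ext s
    simp only [Set.mem_preimage, Set.mem_Ico]
    constructor <;> intro h <;> constructor <;> linarith [h.1, h.2]
  have hmp : MeasurePreserving (fun s : ℝ => s₀ + s)
      (volume.restrict (Set.Ico 0 T)) (volume.restrict (Set.Ico s₀ (s₀ + T))) := by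
    have := (measurePreserving_add_left volume s₀).restrict_preimage
      (measurableSet_Ico (a := s₀) (b := s₀ + T))
    rwa [hpre] at this
  have h1 : ∫⁻ s in Set.Ico 0 T, f (s₀ + s) = ∫⁻ u in Set.Ico s₀ (s₀ + T), f u :=
    hmp.lintegral_comp hf
  rw [h1]
  have h2 : ∫⁻ u in Set.Ico s₀ (s₀ + T), f u = ∫⁻ u in Set.Ioc s₀ (s₀ + T), f u :=
    setLIntegral_congr Ico_ae_eq_Ioc
  have h3 : ∫⁻ u in Set.Ico 0 T, f u = ∫⁻ u in Set.Ioc 0 (0 + T), f u := by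
    rw [zero_add]
    exact setLIntegral_congr Ico_ae_eq_Ioc
  rw [h2, h3]
  haveI : VAddInvariantMeasure (AddSubgroup.zmultiples T) ℝ volume :=
    ⟨fun c s _ => measure_preimage_add _ _ _⟩
  apply IsAddFundamentalDomain.setLIntegral_eq (G := AddSubgroup.zmultiples T)
  exacts [isAddFundamentalDomain_Ioc hT s₀, isAddFundamentalDomain_Ioc hT 0,
    hper.map_vadd_zmultiples]

/-- Local product decomposition: for `γ > 0` in `Γ` with character `χ`
(`χ(e_s) = e^{iγs}`) and `K_γ = ker χ`, the map `(y,s) ↦ y + e_s` is a bijection from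
`K_γ × [0, 2π/γ)` onto `K` carrying `(γ/2π)·σ₁ × dt` to the Haar measure `σ`. -/
theorem stmt14 {K : Type*} [TopologicalSpace K] [AddCommGroup K] [IsTopologicalAddGroup K]
    [CompactSpace K] [MeasurableSpace K] [BorelSpace K]
    (σ : Measure K) [IsProbabilityMeasure σ] [MeasureTheory.Measure.IsAddHaarMeasure σ]
    (e : ℝ →+ K) (hec : Continuous e) (hed : DenseRange e)
    (γ : ℝ) (hγ : 0 < γ)
    (χ : K → ℂ) (hχc : Continuous χ) (hχmul : ∀ x y, χ (x + y) = χ x * χ y)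
    (hχu : ∀ x, ‖χ x‖ = 1) (hχe : ∀ s : ℝ, χ (e s) = Complex.exp (Complex.I * γ * s))
    (Kγ : AddSubgroup K) (hKγ : ∀ x : K, x ∈ Kγ ↔ χ x = 1)
    [MeasurableSpace Kγ] [BorelSpace Kγ]
    (σ₁ : Measure Kγ) [IsProbabilityMeasure σ₁]
    [MeasureTheory.Measure.IsAddHaarMeasure σ₁] :
    Set.BijOn (fun p : Kγ × ℝ => (p.1 : K) + e p.2)
      (Set.univ ×ˢ Set.Ico 0 (2 * π / γ)) Set.univ
    ∧ MeasurePreserving (fun p : Kγ × ℝ => (p.1 : K) + e p.2)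
        (ENNReal.ofReal (γ / (2 * π)) • σ₁.prod (volume.restrict (Set.Ico 0 (2 * π / γ))))
        σ := by
  have hπ : (0:ℝ) < π := Real.pi_pos
  have hγ' : γ ≠ 0 := ne_of_gt hγ
  set T : ℝ := 2 * π / γ with hTdef
  have hT : 0 < T := by positivity
  have hγT : γ * T = 2 * π := by rw [hTdef]; field_simp
  set F : Kγ × ℝ → K := fun p : Kγ × ℝ => (p.1 : K) + e p.2 with hFdef
  -- basics about χ
  have hχne : ∀ x, χ x ≠ 0 := by
    intro x h0
    have := hχu x
    rw [h0, norm_zero] at this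
    norm_num at this
  have hχ0 : χ 0 = 1 := by
    have h := hχmul 0 0
    rw [add_zero] at h
    have := mul_left_cancel₀ (hχne 0) (by rw [mul_one, ← h] : χ 0 * 1 = χ 0 * χ 0)
    exact this.symm
  have hχinv : ∀ x, χ x * χ (-x) = 1 := by
    intro x
    rw [← hχmul, add_neg_cancel, hχ0]
  have hεK : e T ∈ Kγ := by
    rw [hKγ, hχe]
    have h2 : Complex.I * γ * T = 2 * π * Complex.I := by
      rw [mul_assoc, ← Complex.ofReal_mul, hγT]
      push_cast
      ring
    rw [h2, Complex.exp_two_pi_mul_I]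
  -- injectivity of s ↦ exp(iγs) on [0,T)
  have hexpinj : ∀ s ∈ Set.Ico (0:ℝ) T, ∀ s' ∈ Set.Ico (0:ℝ) T,
      Complex.exp (Complex.I * γ * s) = Complex.exp (Complex.I * γ * s') → s = s' := by
    intro s hs s' hs' h
    rw [Complex.exp_eq_exp_iff_exists_int] at h
    obtain ⟨n, hn⟩ := h
    have him := congrArg Complex.im hn
    simp only [Complex.add_im, Complex.mul_im, Complex.mul_re, Complex.I_re, Complex.I_im,
      Complex.ofReal_re, Complex.ofReal_im, Complex.intCast_re, Complex.intCast_im] at him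
    ring_nf at him
    norm_num at him
    -- him should be: γ * s = γ * s' + n * (2 * π) (in some normal form)
    have hsb : γ * s < 2 * π := by
      calc γ * s < γ * T := by
            exact mul_lt_mul_of_pos_left hs.2 hγ
        _ = 2 * π := hγT
    have hs'b : γ * s' < 2 * π := by
      calc γ * s' < γ * T := mul_lt_mul_of_pos_left hs'.2 hγ
        _ = 2 * π := hγT
    have hs0 : 0 ≤ γ * s := mul_nonneg hγ.le hs.1
    have hs'0 : 0 ≤ γ * s' := mul_nonneg hγ.le hs'.1
    have hn0 : n = 0 := by
      have hlt : ((-1 : ℤ) : ℝ) < (n : ℝ) := by push_cast; nlinarith [him, hπ]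
      have hgt : (n : ℝ) < ((1 : ℤ) : ℝ) := by push_cast; nlinarith [him, hπ]
      have h1 : (-1 : ℤ) < n := by exact_mod_cast hlt
      have h2 : n < (1 : ℤ) := by exact_mod_cast hgt
      omega
    rw [hn0] at him
    norm_num at him
    rcases him with h | h
    · exact h
    · exact absurd h hγ'
  -- surjectivity: every character value is hit
  have hsurj : ∀ x : K, ∃ s ∈ Set.Ico (0:ℝ) T, χ (e s) = χ x := by
    intro x
    have habs : ‖χ x‖ = 1 := by
      exact hχu x
    have hx : Complex.exp ((χ x).arg * Complex.I) = χ x := by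
      have := Complex.norm_mul_exp_arg_mul_I (χ x)
      rwa [habs, Complex.ofReal_one, one_mul] at this
    set θ := (χ x).arg with hθ
    have hθub : θ ≤ π := Complex.arg_le_pi _
    have hθlb : -π < θ := Complex.neg_pi_lt_arg _
    by_cases h0 : 0 ≤ θ
    · refine ⟨θ / γ, ⟨div_nonneg h0 hγ.le, ?_⟩, ?_⟩
      · rw [hTdef, div_lt_div_iff_of_pos_right hγ]
        linarith
      · rw [hχe]
        have : Complex.I * γ * ((θ / γ : ℝ) : ℂ) = θ * Complex.I := by
          rw [mul_assoc, ← Complex.ofReal_mul, mul_div_cancel₀ θ hγ']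
          ring
        rw [this, hx]
    · push_neg at h0
      refine ⟨(θ + 2 * π) / γ, ⟨div_nonneg (by linarith) hγ.le, ?_⟩, ?_⟩
      · rw [hTdef, div_lt_div_iff_of_pos_right hγ]
        linarith
      · rw [hχe]
        have h1 : Complex.I * γ * (((θ + 2 * π) / γ : ℝ) : ℂ)
            = θ * Complex.I + 2 * π * Complex.I := by
          rw [mul_assoc, ← Complex.ofReal_mul, mul_div_cancel₀ _ hγ']
          push_cast
          ring
        rw [h1, Complex.exp_add, Complex.exp_two_pi_mul_I, mul_one, hx]
  -- the bijection
  have hBij : Set.BijOn F (Set.univ ×ˢ Set.Ico 0 T) Set.univ := by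
    refine ⟨fun p _ => Set.mem_univ _, ?_, ?_⟩
    · rintro ⟨y, s⟩ hp ⟨y', s'⟩ hq heq
      have hs : s ∈ Set.Ico (0:ℝ) T := hp.2
      have hs' : s' ∈ Set.Ico (0:ℝ) T := hq.2
      have hy1 : χ (y : K) = 1 := (hKγ _).1 y.2
      have hy'1 : χ (y' : K) = 1 := (hKγ _).1 y'.2
      have hχeq : χ (e s) = χ (e s') := by
        have := congrArg χ heq
        simp only [hFdef] at this
        rwa [hχmul, hχmul, hy1, hy'1, one_mul, one_mul] at this
      rw [hχe, hχe] at hχeq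
      have hss' : s = s' := hexpinj s hs s' hs' hχeq
      subst hss'
      have hyy' : (y : K) = (y' : K) := by
        have : (y : K) + e s = (y' : K) + e s := heq
        exact add_right_cancel this
      exact Prod.ext (Subtype.ext hyy') rfl
    · intro x _
      obtain ⟨s, hs, hsx⟩ := hsurj x
      have hmem : x - e s ∈ Kγ := by
        rw [hKγ]
        rw [sub_eq_add_neg, hχmul]
        rw [← hsx]
        exact hχinv (e s)
      refine ⟨(⟨x - e s, hmem⟩, s), ⟨Set.mem_univ _, hs⟩, ?_⟩
      simp only [hFdef]
      exact sub_add_cancel x (e s)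
  -- measurability
  have hFc : Continuous F :=
    (continuous_subtype_val.comp continuous_fst).add (hec.comp continuous_snd)
  have hFm : Measurable F := hFc.measurable
  -- the product measure
  set I0 : Set ℝ := Set.Ico (0:ℝ) T with hI0def
  set ν₀ : Measure (Kγ × ℝ) := σ₁.prod (volume.restrict I0) with hν₀def
  set c : ℝ≥0∞ := ENNReal.ofReal (γ / (2 * π)) with hcdef
  set ν : Measure (Kγ × ℝ) := c • ν₀ with hνdef
  set μ : Measure K := Measure.map F ν with hμdef
  set g : Set K → ℝ → ℝ≥0∞ := fun S s => σ₁ {y : Kγ | (y : K) + e s ∈ S} with hgdef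
  have hslice : ∀ (S : Set K), MeasurableSet S → ν₀ (F ⁻¹' S) = ∫⁻ s in I0, g S s := by
    intro S hS
    rw [hν₀def, Measure.prod_apply_symm (hFm hS)]
    rfl
  have hgmeas : ∀ (S : Set K), MeasurableSet S → Measurable (g S) := by
    intro S hS
    exact measurable_measure_prodMk_right (hFm hS)
  have hgper : ∀ (S : Set K), Function.Periodic (g S) T := by
    intro S s
    have hset : {y : Kγ | (y : K) + e (s + T) ∈ S}
        = (fun y : Kγ => (⟨e T, hεK⟩ : Kγ) + y) ⁻¹' {y : Kγ | (y : K) + e s ∈ S} := by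
      ext y
      simp only [Set.mem_setOf_eq, Set.mem_preimage, AddSubgroup.coe_add]
      have : (y : K) + e (s + T) = (e T + (y : K)) + e s := by
        rw [map_add]; abel
      rw [this]
    rw [hgdef]
    simp only []
    rw [hset, measure_preimage_add]
  -- translation invariance of ν₀ ∘ F⁻¹
  have key : ∀ (x : K) (S : Set K), MeasurableSet S →
      ν₀ (F ⁻¹' ((fun w => x + w) ⁻¹' S)) = ν₀ (F ⁻¹' S) := by
    intro x S hS
    obtain ⟨⟨z, s₀⟩, -, hzs⟩ := hBij.surjOn (Set.mem_univ x)
    have hS' : MeasurableSet ((fun w => x + w) ⁻¹' S) :=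
      (continuous_const.add continuous_id).measurable hS
    rw [hslice _ hS', hslice _ hS]
    have hpt : ∀ s : ℝ, g ((fun w => x + w) ⁻¹' S) s = g S (s₀ + s) := by
      intro s
      have hset : {y : Kγ | (y : K) + e s ∈ (fun w => x + w) ⁻¹' S}
          = (fun y : Kγ => z + y) ⁻¹' {y : Kγ | (y : K) + e (s₀ + s) ∈ S} := by
        ext y
        simp only [Set.mem_setOf_eq, Set.mem_preimage, AddSubgroup.coe_add]
        have hxw : x + ((y : K) + e s) = ((z : K) + (y : K)) + e (s₀ + s) := by
          rw [← hzs, map_add]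
          simp only [hFdef]
          abel
        rw [hxw]
      rw [hgdef]
      simp only []
      rw [hset, measure_preimage_add]
    calc ∫⁻ s in I0, g ((fun w => x + w) ⁻¹' S) s
        = ∫⁻ s in I0, g S (s₀ + s) := by
          exact lintegral_congr fun s => hpt s
      _ = ∫⁻ s in I0, g S s :=
          per_setLIntegral hT (g S) (hgmeas S hS) (hgper S) s₀
  -- μ is a left-invariant probability measure
  have hν₀univ : ν₀ Set.univ = ENNReal.ofReal T := by
    rw [hν₀def, ← Set.univ_prod_univ, Measure.prod_prod, measure_univ, one_mul,
      Measure.restrict_apply_univ, hI0def, Real.volume_Ico, sub_zero]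
  have hcT : c * ENNReal.ofReal T = 1 := by
    rw [hcdef, ← ENNReal.ofReal_mul (by positivity)]
    rw [show γ / (2 * π) * T = 1 by rw [hTdef]; field_simp]
    exact ENNReal.ofReal_one
  have hμapp : ∀ (S : Set K), MeasurableSet S → μ S = c * ν₀ (F ⁻¹' S) := by
    intro S hS
    rw [hμdef, Measure.map_apply hFm hS, hνdef, Measure.smul_apply, smul_eq_mul]
  have hμuniv : μ Set.univ = 1 := by
    rw [hμapp _ MeasurableSet.univ, Set.preimage_univ, hν₀univ, hcT]
  have hμinv : Measure.IsAddLeftInvariant μ := by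
    constructor
    intro x
    ext S hS
    have hS' : MeasurableSet ((fun w => x + w) ⁻¹' S) :=
      (continuous_const.add continuous_id).measurable hS
    rw [Measure.map_apply (measurable_const_add x) hS]
    rw [hμapp _ hS', hμapp _ hS, key x S hS]
  haveI : IsFiniteMeasure μ := ⟨by rw [hμuniv]; exact ENNReal.one_lt_top⟩
  haveI := hμinv
  -- uniqueness of Haar measure on a compact group
  have huniq : μ = σ := by
    have h := Measure.isAddInvariant_eq_smul_of_compactSpace μ σ
    have huniv := congrArg (fun m : Measure K => m Set.univ) h
    simp only [hμuniv, Measure.smul_apply, measure_univ] at huniv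
    rw [ENNReal.smul_def, smul_eq_mul, mul_one] at huniv
    have hfac : μ.addHaarScalarFactor σ = 1 := by exact_mod_cast huniv.symm
    rw [h, hfac, one_smul]
  exact ⟨hBij, hFm, huniq⟩
end
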